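/- Let D ∈ H⁴ and suppose g·D = NF_orth(λ₁, λ₂, λ₃) for some g ∈ SO(3) and λ₁, λ₂, λ₃ ∈ ℝ (i.e., D lies in the closed orthotropic stratum). Then the invariants J₂, …, J₇ of D satisfy the six syzygies: (a) −1350J₃J₇ − 840J₄J₆ + 465J₂²J₆ + 270J₅² + 720J₂J₃J₅ + 747J₂J₄² − 170J₃²J₄ − 564J₂³J₄ + 70J₂²J₃² + 84J₂⁵ = 0; (b) −1620J₄J₇ + 810J₂²J₇ + 360J₅J₆ − 1110J₂J₃J₆ + 999J₂J₄J₅ + 960J₃²J₅ − 549J₂³J₅ − 972J₃J₄² + 1638J₂²J₃J₄ − 80J₂J₃³ − 312J₂⁴J₃ = 0; (c) 4050J₅J₇ − 25650J₂J₃J₇ − 14310J₂J₄J₆ + 9600J₃²J₆ + 7965J₂³J₆ + 9450J₃J₄J₅ + 10530J₂²J₃J₅ + 1134J₄³ + 11259J₂²J₄² − 12330J₂J₃²J₄ − 9018J₂⁴J₄ + 400J₃⁴ + 3270J₂³J₃² + 1350J₂⁶ = 0; (d) −12150J₂J₃J₇ + 3600J₆² − 11610J₂J₄J₆ + 9750J₃²J₆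 + 4410J₂³J₆ + 8505J₃J₄J₅ + 3645J₂²J₃J₅ + 1458J₄³ + 5670J₂²J₄² − 10710J₂J₃²J₄ − 4104J₂⁴J₄ + 400J₃⁴ + 2580J₂³J₃² + 576J₂⁶ = 0; (e) 1800J₆J₇ − 10800J₂J₄J₇ + 4800J₃²J₇ + 4950J₂³J₇ + 4020J₃J₄J₆ − 8370J₂²J₃J₆ + 162J₄²J₅ + 7371J₂²J₄J₅ + 2880J₂J₃²J₅ − 3483J₂⁴J₅ − 9216J₂J₃J₄² + 640J₃³J₄ + 11946J₂³J₃J₄ − 720J₂²J₃³ − 2160J₂⁵J₃ = 0; (f) 60750J₇² + 178200J₃J₄J₇ − 546750J₂²J₃J₇ + 3780J₄²J₆ − 246780J₂²J₄J₆ + 348000J₂J₃²J₆ + 137025J₂⁴J₆ + 116640J₂J₃J₄J₅ − 75600J₃³J₅ + 223560J₂³J₃J₅ + 29808J₂J₄³ + 82170J₃²J₄² + 177660J₂³J₄² − 438390J₂²J₃²J₄ − 148014J₂⁵J₄ + 17200J₂J₃⁴ + 102000J₂⁴J₃² + 22221J₂⁷ = 0. Moreover, if 6J₆ − 9J₂J₄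 − 20J₃² + 3J₂³ ≠ 0, then the elementary symmetric functions σ₁ = λ₁+λ₂+λ₃, σ₂ = λ₁λ₂+λ₁λ₃+λ₂λ₃, σ₃ = λ₁λ₂λ₃ are recovered rationally from the invariants: σ₁ = −9(3J₇ − 3J₂J₅ + 3J₃J₄ − J₂²J₃) / (2(6J₆ − 9J₂J₄ − 20J₃² + 3J₂³)), σ₂ = (4/7)σ₁² − J₂/14, and σ₃ = J₃/24 + σ₁³/7 − σ₁J₂/56. -/

import Mathlib

open Matrix BigOperators

abbrev Mat3 := Matrix (Fin 3) (Fin 3) ℝ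
abbrev T4 := Fin 3 → Fin 3 → Fin 3 → Fin 3 → ℝ

/-- `g ∈ SO(3)`: real orthogonal 3×3 matrix of determinant 1. -/
def IsSO3 (g : Mat3) : Prop := g * gᵀ = 1 ∧ g.det = 1

/-- A harmonic fourth-order tensor: totally symmetric and traceless. -/
def IsHarm (D : T4) : Prop :=
  (∀ i j k l, D i j k l = D j i k l) ∧
  (∀ i j k l, D i j k l = D i k j l) ∧
  (∀ i j k l, D i j k l = D i j l k) ∧
  (∀ i j, ∑ k, D k k i j = 0)

/-- The action of a rotation `g` on a fourth-order tensor. -/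
noncomputable def act (g : Mat3) (D : T4) : T4 := fun i j k l =>
  ∑ p, ∑ q, ∑ r, ∑ s, g i p * g j q * g k r * g l s * D p q r s

/-- `D²`, the square of a fourth-order tensor. -/
noncomputable def sqT (D : T4) : T4 := fun i j k l => ∑ p, ∑ q, D i j p q * D p q k l

/-- `D³`, the cube of a fourth-order tensor. -/
noncomputable def cbT (D : T4) : T4 := fun i j k l => ∑ p, ∑ q, sqT D i j p q * D p q k l

/-- The second-order Boehler covariant `d₂(D) j l = ∑ᵢ (D²) i j i l`. -/
noncomputable def d2 (D : T4) : Mat3 := Matrix.of fun j l => ∑ i, sqT D i j i l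

/-- The second-order covariant `d₃(D) j l = ∑ᵢ (D³) i j i l`. -/
noncomputable def d3 (D : T4) : Mat3 := Matrix.of fun j l => ∑ i, cbT D i j i l

/-- Fundamental invariant `J₂ = tr d₂`. -/
noncomputable def J2 (D : T4) : ℝ := (d2 D).trace
/-- Fundamental invariant `J₃ = tr d₃`. -/
noncomputable def J3 (D : T4) : ℝ := (d3 D).trace
/-- Fundamental invariant `J₄ = tr(d₂²)`. -/
noncomputable def J4 (D : T4) : ℝ := (d2 D * d2 D).trace
/-- Fundamental invariant `J₅ = ∑ (d₂)ᵢⱼ D i j k l (d₂)ₖₗ`. -/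
noncomputable def J5 (D : T4) : ℝ :=
  ∑ i, ∑ j, ∑ k, ∑ l, d2 D i j * D i j k l * d2 D k l
/-- Fundamental invariant `J₆ = tr(d₂³)`. -/
noncomputable def J6 (D : T4) : ℝ := (d2 D * d2 D * d2 D).trace
/-- Fundamental invariant `J₇ = ∑ (d₂²)ᵢⱼ D i j k l (d₂)ₖₗ`. -/
noncomputable def J7 (D : T4) : ℝ :=
  ∑ i, ∑ j, ∑ k, ∑ l, (d2 D * d2 D) i j * D i j k l * d2 D k l
/-- Fundamental invariant `J₈ = ∑ (d₂²)ᵢⱼ (D²) i j k l (d₂)ₖₗ`. -/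
noncomputable def J8 (D : T4) : ℝ :=
  ∑ i, ∑ j, ∑ k, ∑ l, (d2 D * d2 D) i j * sqT D i j k l * d2 D k l
/-- Fundamental invariant `J₉ = ∑ (d₂²)ᵢⱼ D i j k l (d₂²)ₖₗ`. -/
noncomputable def J9 (D : T4) : ℝ :=
  ∑ i, ∑ j, ∑ k, ∑ l, (d2 D * d2 D) i j * D i j k l * (d2 D * d2 D) k l
/-- Fundamental invariant `J₁₀ = ∑ (d₂²)ᵢⱼ (D²) i j k l (d₂²)ₖₗ`. -/
noncomputable def J10 (D : T4) : ℝ :=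
  ∑ i, ∑ j, ∑ k, ∑ l, (d2 D * d2 D) i j * sqT D i j k l * (d2 D * d2 D) k l

/-- The totally symmetric tensor whose value at `(i,j,k,l)` depends only on the
multiset of indices `{i,j,k,l}`. -/
noncomputable def symT (f : Multiset (Fin 3) → ℝ) : T4 := fun i j k l => f {i, j, k, l}

/-- Normal form of a cubic (`[𝕆]`) tensor in `H⁴` with parameter `δ`
(indices `0,1,2` correspond to `1,2,3`). -/
noncomputable def NFcubic (δ : ℝ) : T4 := symT fun m =>
  if m = {0, 0, 0, 0} ∨ m = {1, 1, 1, 1} ∨ m = {2, 2, 2, 2} then 8 * δ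
  else if m = {0, 0, 1, 1} ∨ m = {0, 0, 2, 2} ∨ m = {1, 1, 2, 2} then -(4 * δ)
  else 0

/-- Normal form of a transversely isotropic (`[O(2)]`) tensor in `H⁴` with parameter `δ`. -/
noncomputable def NFti (δ : ℝ) : T4 := symT fun m =>
  if m = {0, 0, 0, 0} ∨ m = {1, 1, 1, 1} then 3 * δ
  else if m = {2, 2, 2, 2} then 8 * δ
  else if m = {0, 0, 1, 1} then δ
  else if m = {0, 0, 2, 2} ∨ m = {1, 1, 2, 2} then -(4 * δ)
  else 0

/-- Normal form of a trigonal (`[𝔻₃]`) tensor in `H⁴` with parameters `δ, σ`. -/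
noncomputable def NFtrig (δ σ : ℝ) : T4 := symT fun m =>
  if m = {0, 0, 0, 0} ∨ m = {1, 1, 1, 1} then 3 * δ
  else if m = {2, 2, 2, 2} then 8 * δ
  else if m = {0, 0, 1, 1} then δ
  else if m = {0, 0, 2, 2} ∨ m = {1, 1, 2, 2} then -(4 * δ)
  else if m = {0, 0, 1, 2} then -σ
  else if m = {1, 1, 1, 2} then σ
  else 0

/-- Normal form of a tetragonal (`[𝔻₄]`) tensor in `H⁴` with parameters `δ, σ`. -/
noncomputable def NFtetra (δ σ : ℝ) : T4 := symT fun m =>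
  if m = {0, 0, 0, 0} ∨ m = {1, 1, 1, 1} then 3 * δ - σ
  else if m = {2, 2, 2, 2} then 8 * δ
  else if m = {0, 0, 1, 1} then δ + σ
  else if m = {0, 0, 2, 2} ∨ m = {1, 1, 2, 2} then -(4 * δ)
  else 0

/-- Normal form of an orthotropic (`[𝔻₂]`) tensor in `H⁴` with parameters `λ₁, λ₂, λ₃`. -/
noncomputable def NForth (l1 l2 l3 : ℝ) : T4 := symT fun m =>
  if m = {0, 0, 0, 0} then -l2 - l3
  else if m = {1, 1, 1, 1} then -l1 - l3
  else if m = {2, 2, 2, 2} then -l1 - l2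
  else if m = {0, 0, 1, 1} then l3
  else if m = {0, 0, 2, 2} then l2
  else if m = {1, 1, 2, 2} then l1
  else 0

/-!
The invariants `J₂, …, J₇` are `SO(3)`-invariant, so they may be evaluated on the normal form.
Flattening a fourth-order tensor to a matrix on index pairs, the action of `g` becomes
conjugation by the orthogonal matrix `g ⊗ g`, `D²` and `D³` become matrix powers, `d₂` and `d₃`
become partial traces (which intertwine conjugation by `g ⊗ g` with conjugation by `g`), and
`J₅`, `J₇` become bilinear forms in `vec d₂`, `vec d₂²` with matrix `D`. On `NF_orth(λ₁, λ₂, λ₃)` every `Jₖ` is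
a polynomial in `σ₁, σ₂, σ₃`; the six syzygies are then polynomial identities, and `J₂`, `J₃` and
the combination `3J₇ − 3J₂J₅ + 3J₃J₄ − J₂²J₃`, which is `σ₁` times `−(2/9)(6J₆ − 9J₂J₄ − 20J₃² + 3J₂³)`,
can be solved for `σ₂`, `σ₃` and `σ₁`.
-/

open scoped Kronecker

def partialTrace {n m R : Type*} [Fintype m] [AddCommMonoid R] (S : Matrix (n × m) (n × m) R) :
    Matrix n n R :=
  of fun j l => ∑ i, S (j, i) (l, i)

section PartialTrace
variable {n m R : Type*} [Fintype n] [Fintype m] [DecidableEq n] [DecidableEq m] [CommSemiring R]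

omit [DecidableEq n] in
theorem partialTrace_kronecker_one_mul_mul (A B : Matrix n n R) (S : Matrix (n × m) (n × m) R) :
    partialTrace ((A ⊗ₖ (1 : Matrix m m R)) * S * (B ⊗ₖ 1)) = A * partialTrace S * B := by
  ext j l
  simp only [partialTrace, of_apply, mul_apply, kroneckerMap_apply, one_apply, mul_ite, mul_one,
    mul_zero, ite_mul, zero_mul, Fintype.sum_prod_type, Finset.sum_ite_eq, Finset.sum_ite_eq',
    Finset.mem_univ, if_true, Finset.sum_mul, Finset.mul_sum]
  rw [Finset.sum_comm]
  exact Finset.sum_congr rfl fun _ _ => Finset.sum_comm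

theorem partialTrace_one_kronecker_conj {g : Matrix m m R} (hg : gᵀ * g = 1)
    (S : Matrix (n × m) (n × m) R) :
    partialTrace (((1 : Matrix n n R) ⊗ₖ g) * S * (1 ⊗ₖ g)ᵀ) = partialTrace S := by
  ext j l
  have hblock : partialTrace (((1 : Matrix n n R) ⊗ₖ g) * S * (1 ⊗ₖ g)ᵀ) j l
      = trace (g * of (fun a c => S (j, a) (l, c)) * gᵀ) := by
    simp [partialTrace, trace, mul_apply, Fintype.sum_prod_type, one_apply, Finset.sum_mul]
  rw [hblock, trace_mul_cycle, hg, one_mul]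
  rfl

theorem partialTrace_kronecker_conj {g : Matrix m m R} (hg : gᵀ * g = 1)
    (A B : Matrix n n R) (S : Matrix (n × m) (n × m) R) :
    partialTrace ((A ⊗ₖ g) * S * (B ⊗ₖ g)ᵀ) = A * partialTrace S * Bᵀ := by
  have hA : A ⊗ₖ g = (A ⊗ₖ 1) * (1 ⊗ₖ g) := by rw [← mul_kronecker_mul, mul_one, one_mul]
  have hB : (B ⊗ₖ g)ᵀ = (1 ⊗ₖ g)ᵀ * (Bᵀ ⊗ₖ 1) := by
    rw [← kroneckerMap_transpose, ← kroneckerMap_transpose, transpose_one, ← mul_kronecker_mul,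
      mul_one, one_mul]
  rw [hA, hB, show (A ⊗ₖ 1) * (1 ⊗ₖ g) * S * ((1 ⊗ₖ g)ᵀ * (Bᵀ ⊗ₖ 1))
      = (A ⊗ₖ 1) * ((1 ⊗ₖ g) * S * (1 ⊗ₖ g)ᵀ) * (Bᵀ ⊗ₖ 1) by simp only [Matrix.mul_assoc],
    partialTrace_kronecker_one_mul_mul, partialTrace_one_kronecker_conj hg]

end PartialTrace

section Orthogonal
variable {n R : Type*} [Fintype n] [DecidableEq n] [CommSemiring R] {g : Matrix n n R}

theorem kronecker_transpose_mul_self_eq_one (hg : gᵀ * g = 1) : (g ⊗ₖ g)ᵀ * (g ⊗ₖ g) = 1 := by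
  rw [← kroneckerMap_transpose, ← mul_kronecker_mul, hg, one_kronecker_one]

theorem conj_mul_conj (hg : gᵀ * g = 1) (A B : Matrix n n R) :
    g * A * gᵀ * (g * B * gᵀ) = g * (A * B) * gᵀ := by
  simp only [Matrix.mul_assoc, ← Matrix.mul_assoc gᵀ, hg, Matrix.one_mul]

theorem dotProduct_conj_mulVec (hg : gᵀ * g = 1) (S : Matrix n n R) (v w : n → R) :
    (g *ᵥ v) ⬝ᵥ ((g * S * gᵀ) *ᵥ (g *ᵥ w)) = v ⬝ᵥ (S *ᵥ w) := by
  rw [mulVec_mulVec, Matrix.mul_assoc, Matrix.mul_assoc, hg, Matrix.mul_one, ← mulVec_mulVec,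
    ← vecMul_transpose, ← dotProduct_mulVec, mulVec_mulVec, hg, one_mulVec]

theorem trace_conj (hg : gᵀ * g = 1) (A : Matrix n n R) : trace (g * A * gᵀ) = trace A := by
  rw [trace_mul_cycle, hg, Matrix.one_mul]

end Orthogonal

/-- `D` as a matrix on index pairs; pairs are ordered as in `Matrix.vec`, second index first. -/
def pairMatrix (D : T4) : Matrix (Fin 3 × Fin 3) (Fin 3 × Fin 3) ℝ :=
  of fun x y => D x.2 x.1 y.2 y.1

theorem pairMatrix_injective : Function.Injective pairMatrix := by
  intro D E h
  funext i j k l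
  exact congrFun (congrFun h (j, i)) (l, k)

theorem pairMatrix_act (g : Mat3) (D : T4) :
    pairMatrix (act g D) = (g ⊗ₖ g) * pairMatrix D * (g ⊗ₖ g)ᵀ := by
  ext ⟨j, i⟩ ⟨l, k⟩
  simp only [pairMatrix, act, of_apply, mul_apply, kroneckerMap_apply, transpose_apply,
    Fintype.sum_prod_type, Fin.sum_univ_three]
  ring

theorem pairMatrix_sqT (D : T4) : pairMatrix (sqT D) = pairMatrix D * pairMatrix D := by
  ext ⟨j, i⟩ ⟨l, k⟩
  simp only [pairMatrix, sqT, of_apply, mul_apply, Fintype.sum_prod_type]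
  exact Finset.sum_comm

theorem pairMatrix_cbT (D : T4) : pairMatrix (cbT D) = pairMatrix (sqT D) * pairMatrix D := by
  ext ⟨j, i⟩ ⟨l, k⟩
  simp only [pairMatrix, cbT, of_apply, mul_apply, Fintype.sum_prod_type]
  exact Finset.sum_comm

theorem d2_eq_partialTrace (D : T4) : d2 D = partialTrace (pairMatrix (sqT D)) := rfl

theorem d3_eq_partialTrace (D : T4) : d3 D = partialTrace (pairMatrix (cbT D)) := rfl

def doubleContract (M : Mat3) (D : T4) (P : Mat3) : ℝ :=
  ∑ i, ∑ j, ∑ k, ∑ l, M i j * D i j k l * P k l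

theorem doubleContract_eq_vec_dotProduct (M : Mat3) (D : T4) (P : Mat3) :
    doubleContract M D P = vec M ⬝ᵥ (pairMatrix D *ᵥ vec P) := by
  simp only [doubleContract, vec, pairMatrix, of_apply, dotProduct, mulVec, Fintype.sum_prod_type,
    Finset.mul_sum, mul_assoc]
  rw [Finset.sum_comm]
  exact Finset.sum_congr rfl fun _ _ => Finset.sum_congr rfl fun _ _ => Finset.sum_comm

theorem J5_eq_doubleContract (D : T4) : J5 D = doubleContract (d2 D) D (d2 D) := rfl

theorem J7_eq_doubleContract (D : T4) : J7 D = doubleContract (d2 D * d2 D) D (d2 D) := rfl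

theorem doubleContract_diagonal (u v : Fin 3 → ℝ) (D : T4) :
    doubleContract (diagonal u) D (diagonal v) = ∑ a, ∑ b, u a * D a a b b * v b := by
  simp [doubleContract, diagonal_apply]

section Rotation
variable {g : Mat3} (hg : gᵀ * g = 1) (D : T4)
include hg

theorem sqT_act : sqT (act g D) = act g (sqT D) :=
  pairMatrix_injective <| by
    rw [pairMatrix_sqT, pairMatrix_act, pairMatrix_act, pairMatrix_sqT,
      conj_mul_conj (kronecker_transpose_mul_self_eq_one hg)]

theorem cbT_act : cbT (act g D) = act g (cbT D) :=
  pairMatrix_injective <| by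
    rw [pairMatrix_cbT, sqT_act hg, pairMatrix_act, pairMatrix_act, pairMatrix_act, pairMatrix_cbT,
      conj_mul_conj (kronecker_transpose_mul_self_eq_one hg)]

theorem d2_act : d2 (act g D) = g * d2 D * gᵀ := by
  rw [d2_eq_partialTrace, sqT_act hg, pairMatrix_act, partialTrace_kronecker_conj hg,
    d2_eq_partialTrace]

theorem d3_act : d3 (act g D) = g * d3 D * gᵀ := by
  rw [d3_eq_partialTrace, cbT_act hg, pairMatrix_act, partialTrace_kronecker_conj hg,
    d3_eq_partialTrace]

theorem doubleContract_act (M P : Mat3) :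
    doubleContract (g * M * gᵀ) (act g D) (g * P * gᵀ) = doubleContract M D P := by
  rw [doubleContract_eq_vec_dotProduct, doubleContract_eq_vec_dotProduct, ← kronecker_mulVec_vec,
    ← kronecker_mulVec_vec, pairMatrix_act,
    dotProduct_conj_mulVec (kronecker_transpose_mul_self_eq_one hg)]

theorem J2_act : J2 (act g D) = J2 D := by
  rw [J2, J2, d2_act hg, trace_conj hg]

theorem J3_act : J3 (act g D) = J3 D := by
  rw [J3, J3, d3_act hg, trace_conj hg]

theorem J4_act : J4 (act g D) = J4 D := by
  rw [J4, J4, d2_act hg, conj_mul_conj hg, trace_conj hg]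

theorem J5_act : J5 (act g D) = J5 D := by
  rw [J5_eq_doubleContract, J5_eq_doubleContract, d2_act hg, doubleContract_act hg]

theorem J6_act : J6 (act g D) = J6 D := by
  rw [J6, J6, d2_act hg, conj_mul_conj hg, conj_mul_conj hg, trace_conj hg]

theorem J7_act : J7 (act g D) = J7 D := by
  rw [J7_eq_doubleContract, J7_eq_doubleContract, d2_act hg, conj_mul_conj hg,
    doubleContract_act hg]

end Rotation

section NormalForm
variable (l1 l2 l3 : ℝ)

local notation "σ₁" => l1 + l2 + l3
local notation "σ₂" => l1 * l2 + l1 * l3 + l2 * l3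
local notation "σ₃" => l1 * l2 * l3

theorem NForth_eq : NForth l1 l2 l3 =
    ![![![![-l2 - l3, 0, 0], ![0, l3, 0], ![0, 0, l2]],
        ![![0, l3, 0], ![l3, 0, 0], ![0, 0, 0]],
        ![![0, 0, l2], ![0, 0, 0], ![l2, 0, 0]]],
      ![![![0, l3, 0], ![l3, 0, 0], ![0, 0, 0]],
        ![![l3, 0, 0], ![0, -l1 - l3, 0], ![0, 0, l1]],
        ![![0, 0, 0], ![0, 0, l1], ![0, l1, 0]]],
      ![![![0, 0, l2], ![0, 0, 0], ![l2, 0, 0]],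
        ![![0, 0, 0], ![0, 0, l1], ![0, l1, 0]],
        ![![l2, 0, 0], ![0, l1, 0], ![0, 0, -l1 - l2]]]] := by
  funext i j k l
  fin_cases i <;> fin_cases j <;> fin_cases k <;> fin_cases l <;>
    simp +decide [NForth, symT]

theorem d2_NForth : d2 (NForth l1 l2 l3) = diagonal
    ![4 * l2 ^ 2 + 2 * l2 * l3 + 4 * l3 ^ 2, 4 * l1 ^ 2 + 2 * l1 * l3 + 4 * l3 ^ 2,
      4 * l1 ^ 2 + 2 * l1 * l2 + 4 * l2 ^ 2] := by
  ext j l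
  fin_cases j <;> fin_cases l <;> simp [d2, sqT, NForth_eq, Fin.sum_univ_three] <;> ring

theorem J2_NForth : J2 (NForth l1 l2 l3) = 8 * σ₁ ^ 2 - 14 * σ₂ := by
  simp only [J2, d2_NForth, trace_diagonal, Fin.sum_univ_three, cons_val_zero, cons_val_one,
    cons_val]
  ring

theorem J3_NForth : J3 (NForth l1 l2 l3) = 24 * σ₃ - 6 * σ₁ * σ₂ := by
  simp only [J3, d3, cbT, sqT, trace, diag_apply, of_apply, NForth_eq, Fin.sum_univ_three,
    cons_val_zero, cons_val_one, cons_val]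
  ring

theorem J4_NForth :
    J4 (NForth l1 l2 l3) = 68 * σ₂ ^ 2 + 40 * σ₁ * σ₃ - 112 * σ₁ ^ 2 * σ₂ + 32 * σ₁ ^ 4 := by
  simp only [J4, d2_NForth, diagonal_mul_diagonal, trace_diagonal, Fin.sum_univ_three,
    cons_val_zero, cons_val_one, cons_val]
  ring

theorem J5_NForth : J5 (NForth l1 l2 l3) =
    -12 * σ₂ * σ₃ + 28 * σ₁ * σ₂ ^ 2 + 64 * σ₁ ^ 2 * σ₃ - 16 * σ₁ ^ 3 * σ₂ := by
  rw [J5_eq_doubleContract, d2_NForth, doubleContract_diagonal]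
  simp only [NForth_eq, Fin.sum_univ_three, cons_val_zero, cons_val_one, cons_val]
  ring

theorem J6_NForth : J6 (NForth l1 l2 l3) =
    -24 * σ₃ ^ 2 - 344 * σ₂ ^ 3 - 504 * σ₁ * σ₂ * σ₃ + 1008 * σ₁ ^ 2 * σ₂ ^ 2
      + 192 * σ₁ ^ 3 * σ₃ - 672 * σ₁ ^ 4 * σ₂ + 128 * σ₁ ^ 6 := by
  simp only [J6, d2_NForth, diagonal_mul_diagonal, trace_diagonal, Fin.sum_univ_three,
    cons_val_zero, cons_val_one, cons_val]
  ring

theorem J7_NForth : J7 (NForth l1 l2 l3) =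
    104 * σ₂ ^ 2 * σ₃ - 96 * σ₁ * σ₃ ^ 2 - 248 * σ₁ * σ₂ ^ 3 - 432 * σ₁ ^ 2 * σ₂ * σ₃
      + 192 * σ₁ ^ 3 * σ₂ ^ 2 + 384 * σ₁ ^ 4 * σ₃ - 64 * σ₁ ^ 5 * σ₂ := by
  rw [J7_eq_doubleContract, d2_NForth, diagonal_mul_diagonal, doubleContract_diagonal]
  simp only [NForth_eq, Fin.sum_univ_three, cons_val_zero, cons_val_one, cons_val]
  ring

end NormalForm

theorem orthotropic_syzygies_of_esymm (s1 s2 s3 j2 j3 j4 j5 j6 j7 : ℝ)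
    (h2 : j2 = 8 * s1 ^ 2 - 14 * s2) (h3 : j3 = 24 * s3 - 6 * s1 * s2)
    (h4 : j4 = 68 * s2 ^ 2 + 40 * s1 * s3 - 112 * s1 ^ 2 * s2 + 32 * s1 ^ 4)
    (h5 : j5 = -12 * s2 * s3 + 28 * s1 * s2 ^ 2 + 64 * s1 ^ 2 * s3 - 16 * s1 ^ 3 * s2)
    (h6 : j6 = -24 * s3 ^ 2 - 344 * s2 ^ 3 - 504 * s1 * s2 * s3 + 1008 * s1 ^ 2 * s2 ^ 2
      + 192 * s1 ^ 3 * s3 - 672 * s1 ^ 4 * s2 + 128 * s1 ^ 6)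
    (h7 : j7 = 104 * s2 ^ 2 * s3 - 96 * s1 * s3 ^ 2 - 248 * s1 * s2 ^ 3 - 432 * s1 ^ 2 * s2 * s3
      + 192 * s1 ^ 3 * s2 ^ 2 + 384 * s1 ^ 4 * s3 - 64 * s1 ^ 5 * s2) :
    (-1350*j3*j7 - 840*j4*j6 + 465*j2^2*j6 + 270*j5^2 + 720*j2*j3*j5
       + 747*j2*j4^2 - 170*j3^2*j4 - 564*j2^3*j4 + 70*j2^2*j3^2 + 84*j2^5 = 0) ∧
    (-1620*j4*j7 + 810*j2^2*j7 + 360*j5*j6 - 1110*j2*j3*j6 + 999*j2*j4*j5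
       + 960*j3^2*j5 - 549*j2^3*j5 - 972*j3*j4^2 + 1638*j2^2*j3*j4
       - 80*j2*j3^3 - 312*j2^4*j3 = 0) ∧
    (4050*j5*j7 - 25650*j2*j3*j7 - 14310*j2*j4*j6 + 9600*j3^2*j6 + 7965*j2^3*j6
       + 9450*j3*j4*j5 + 10530*j2^2*j3*j5 + 1134*j4^3 + 11259*j2^2*j4^2
       - 12330*j2*j3^2*j4 - 9018*j2^4*j4 + 400*j3^4 + 3270*j2^3*j3^2
       + 1350*j2^6 = 0) ∧
    (-12150*j2*j3*j7 + 3600*j6^2 - 11610*j2*j4*j6 + 9750*j3^2*j6 + 4410*j2^3*j6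
       + 8505*j3*j4*j5 + 3645*j2^2*j3*j5 + 1458*j4^3 + 5670*j2^2*j4^2
       - 10710*j2*j3^2*j4 - 4104*j2^4*j4 + 400*j3^4 + 2580*j2^3*j3^2
       + 576*j2^6 = 0) ∧
    (1800*j6*j7 - 10800*j2*j4*j7 + 4800*j3^2*j7 + 4950*j2^3*j7 + 4020*j3*j4*j6
       - 8370*j2^2*j3*j6 + 162*j4^2*j5 + 7371*j2^2*j4*j5 + 2880*j2*j3^2*j5
       - 3483*j2^4*j5 - 9216*j2*j3*j4^2 + 640*j3^3*j4 + 11946*j2^3*j3*j4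
       - 720*j2^2*j3^3 - 2160*j2^5*j3 = 0) ∧
    (60750*j7^2 + 178200*j3*j4*j7 - 546750*j2^2*j3*j7 + 3780*j4^2*j6
       - 246780*j2^2*j4*j6 + 348000*j2*j3^2*j6 + 137025*j2^4*j6
       + 116640*j2*j3*j4*j5 - 75600*j3^3*j5 + 223560*j2^3*j3*j5 + 29808*j2*j4^3
       + 82170*j3^2*j4^2 + 177660*j2^3*j4^2 - 438390*j2^2*j3^2*j4
       - 148014*j2^5*j4 + 17200*j2*j3^4 + 102000*j2^4*j3^2 + 22221*j2^7 = 0) ∧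
    (6*j6 - 9*j2*j4 - 20*j3^2 + 3*j2^3 ≠ 0 →
      (s1 =
          -(9*(3*j7 - 3*j2*j5 + 3*j3*j4 - j2^2*j3)) /
            (2*(6*j6 - 9*j2*j4 - 20*j3^2 + 3*j2^3)) ∧
       s2 = (4/7)*s1^2 - j2/14 ∧
       s3 = j3/24 + s1^3/7 - s1*j2/56)) := by
  subst h2 h3 h4 h5 h6 h7
  refine ⟨by ring, by ring, by ring, by ring, by ring, by ring, fun hden => ⟨?_, by ring, by ring⟩⟩
  rw [eq_div_iff (mul_ne_zero two_ne_zero hden)]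
  ring

theorem orthotropic_syzygies_general (D : T4)
    (g : Mat3) (l1 l2 l3 : ℝ) (hg : IsSO3 g) (hNF : act g D = NForth l1 l2 l3)
    (j2 j3 j4 j5 j6 j7 : ℝ)
    (h2 : j2 = J2 D) (h3 : j3 = J3 D) (h4 : j4 = J4 D)
    (h5 : j5 = J5 D) (h6 : j6 = J6 D) (h7 : j7 = J7 D) :
    (-1350*j3*j7 - 840*j4*j6 + 465*j2^2*j6 + 270*j5^2 + 720*j2*j3*j5
       + 747*j2*j4^2 - 170*j3^2*j4 - 564*j2^3*j4 + 70*j2^2*j3^2 + 84*j2^5 = 0) ∧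
    (-1620*j4*j7 + 810*j2^2*j7 + 360*j5*j6 - 1110*j2*j3*j6 + 999*j2*j4*j5
       + 960*j3^2*j5 - 549*j2^3*j5 - 972*j3*j4^2 + 1638*j2^2*j3*j4
       - 80*j2*j3^3 - 312*j2^4*j3 = 0) ∧
    (4050*j5*j7 - 25650*j2*j3*j7 - 14310*j2*j4*j6 + 9600*j3^2*j6 + 7965*j2^3*j6
       + 9450*j3*j4*j5 + 10530*j2^2*j3*j5 + 1134*j4^3 + 11259*j2^2*j4^2
       - 12330*j2*j3^2*j4 - 9018*j2^4*j4 + 400*j3^4 + 3270*j2^3*j3^2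
       + 1350*j2^6 = 0) ∧
    (-12150*j2*j3*j7 + 3600*j6^2 - 11610*j2*j4*j6 + 9750*j3^2*j6 + 4410*j2^3*j6
       + 8505*j3*j4*j5 + 3645*j2^2*j3*j5 + 1458*j4^3 + 5670*j2^2*j4^2
       - 10710*j2*j3^2*j4 - 4104*j2^4*j4 + 400*j3^4 + 2580*j2^3*j3^2
       + 576*j2^6 = 0) ∧
    (1800*j6*j7 - 10800*j2*j4*j7 + 4800*j3^2*j7 + 4950*j2^3*j7 + 4020*j3*j4*j6
       - 8370*j2^2*j3*j6 + 162*j4^2*j5 + 7371*j2^2*j4*j5 + 2880*j2*j3^2*j5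
       - 3483*j2^4*j5 - 9216*j2*j3*j4^2 + 640*j3^3*j4 + 11946*j2^3*j3*j4
       - 720*j2^2*j3^3 - 2160*j2^5*j3 = 0) ∧
    (60750*j7^2 + 178200*j3*j4*j7 - 546750*j2^2*j3*j7 + 3780*j4^2*j6
       - 246780*j2^2*j4*j6 + 348000*j2*j3^2*j6 + 137025*j2^4*j6
       + 116640*j2*j3*j4*j5 - 75600*j3^3*j5 + 223560*j2^3*j3*j5 + 29808*j2*j4^3
       + 82170*j3^2*j4^2 + 177660*j2^3*j4^2 - 438390*j2^2*j3^2*j4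
       - 148014*j2^5*j4 + 17200*j2*j3^4 + 102000*j2^4*j3^2 + 22221*j2^7 = 0) ∧
    (6*j6 - 9*j2*j4 - 20*j3^2 + 3*j2^3 ≠ 0 →
      (l1 + l2 + l3 =
          -(9*(3*j7 - 3*j2*j5 + 3*j3*j4 - j2^2*j3)) /
            (2*(6*j6 - 9*j2*j4 - 20*j3^2 + 3*j2^3)) ∧
       l1*l2 + l1*l3 + l2*l3 = (4/7)*(l1 + l2 + l3)^2 - j2/14 ∧
       l1*l2*l3 = j3/24 + (l1 + l2 + l3)^3/7 - (l1 + l2 + l3)*j2/56)) := by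
  have horth : gᵀ * g = 1 := mul_eq_one_comm.mp hg.1
  exact orthotropic_syzygies_of_esymm _ _ _ _ _ _ _ _ _
    (by rw [h2, ← J2_act horth D, hNF, J2_NForth]) (by rw [h3, ← J3_act horth D, hNF, J3_NForth])
    (by rw [h4, ← J4_act horth D, hNF, J4_NForth]) (by rw [h5, ← J5_act horth D, hNF, J5_NForth])
    (by rw [h6, ← J6_act horth D, hNF, J6_NForth]) (by rw [h7, ← J7_act horth D, hNF, J7_NForth])

/-- if a harmonic tensor `D ∈ H⁴` lies in the closed orthotropic stratum
(`g·D = NF_orth(λ₁,λ₂,λ₃)` for some rotation `g`), then its invariants `J₂,…,J₇` satisfy the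
six orthotropic syzygies; moreover, if `6J₆ − 9J₂J₄ − 20J₃² + 3J₂³ ≠ 0`, then the elementary
symmetric functions `σ₁, σ₂, σ₃` of `λ₁, λ₂, λ₃` are recovered rationally from the
invariants. -/
theorem orthotropic_syzygies (D : T4) (hD : IsHarm D)
    (g : Mat3) (l1 l2 l3 : ℝ) (hg : IsSO3 g) (hNF : act g D = NForth l1 l2 l3)
    (j2 j3 j4 j5 j6 j7 : ℝ)
    (h2 : j2 = J2 D) (h3 : j3 = J3 D) (h4 : j4 = J4 D)
    (h5 : j5 = J5 D) (h6 : j6 = J6 D) (h7 : j7 = J7 D) :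
    (-1350*j3*j7 - 840*j4*j6 + 465*j2^2*j6 + 270*j5^2 + 720*j2*j3*j5
       + 747*j2*j4^2 - 170*j3^2*j4 - 564*j2^3*j4 + 70*j2^2*j3^2 + 84*j2^5 = 0) ∧
    (-1620*j4*j7 + 810*j2^2*j7 + 360*j5*j6 - 1110*j2*j3*j6 + 999*j2*j4*j5
       + 960*j3^2*j5 - 549*j2^3*j5 - 972*j3*j4^2 + 1638*j2^2*j3*j4
       - 80*j2*j3^3 - 312*j2^4*j3 = 0) ∧
    (4050*j5*j7 - 25650*j2*j3*j7 - 14310*j2*j4*j6 + 9600*j3^2*j6 + 7965*j2^3*j6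
       + 9450*j3*j4*j5 + 10530*j2^2*j3*j5 + 1134*j4^3 + 11259*j2^2*j4^2
       - 12330*j2*j3^2*j4 - 9018*j2^4*j4 + 400*j3^4 + 3270*j2^3*j3^2
       + 1350*j2^6 = 0) ∧
    (-12150*j2*j3*j7 + 3600*j6^2 - 11610*j2*j4*j6 + 9750*j3^2*j6 + 4410*j2^3*j6
       + 8505*j3*j4*j5 + 3645*j2^2*j3*j5 + 1458*j4^3 + 5670*j2^2*j4^2
       - 10710*j2*j3^2*j4 - 4104*j2^4*j4 + 400*j3^4 + 2580*j2^3*j3^2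
       + 576*j2^6 = 0) ∧
    (1800*j6*j7 - 10800*j2*j4*j7 + 4800*j3^2*j7 + 4950*j2^3*j7 + 4020*j3*j4*j6
       - 8370*j2^2*j3*j6 + 162*j4^2*j5 + 7371*j2^2*j4*j5 + 2880*j2*j3^2*j5
       - 3483*j2^4*j5 - 9216*j2*j3*j4^2 + 640*j3^3*j4 + 11946*j2^3*j3*j4
       - 720*j2^2*j3^3 - 2160*j2^5*j3 = 0) ∧
    (60750*j7^2 + 178200*j3*j4*j7 - 546750*j2^2*j3*j7 + 3780*j4^2*j6
       - 246780*j2^2*j4*j6 + 348000*j2*j3^2*j6 + 137025*j2^4*j6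
       + 116640*j2*j3*j4*j5 - 75600*j3^3*j5 + 223560*j2^3*j3*j5 + 29808*j2*j4^3
       + 82170*j3^2*j4^2 + 177660*j2^3*j4^2 - 438390*j2^2*j3^2*j4
       - 148014*j2^5*j4 + 17200*j2*j3^4 + 102000*j2^4*j3^2 + 22221*j2^7 = 0) ∧
    (6*j6 - 9*j2*j4 - 20*j3^2 + 3*j2^3 ≠ 0 →
      (l1 + l2 + l3 =
          -(9*(3*j7 - 3*j2*j5 + 3*j3*j4 - j2^2*j3)) /
            (2*(6*j6 - 9*j2*j4 - 20*j3^2 + 3*j2^3)) ∧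
       l1*l2 + l1*l3 + l2*l3 = (4/7)*(l1 + l2 + l3)^2 - j2/14 ∧
       l1*l2*l3 = j3/24 + (l1 + l2 + l3)^3/7 - (l1 + l2 + l3)*j2/56)) :=
  orthotropic_syzygies_general D g l1 l2 l3 hg hNF j2 j3 j4 j5 j6 j7 h2 h3 h4 h5 h6 h7
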